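/- arXiv:1802.00488 — 2 statements merged into one kernel-verified Lean document; each statement's English description precedes it below -/
import Mathlib

section
/- Let R be a ℤ₊-ring. The following are equivalent for a proper Serre ideal Q of R: (a) Q is an intersection of Serre prime ideals; (b) every Serre ideal I with I² ⊆ Q satisfies I ⊆ Q; (c) every Serre ideal I properly containing Q satisfies I² ⊄ Q; (d) for all r ∈ R₊, rRr ⊆ Q implies r ∈ Q. -/
variable {Γ R : Type*}

/-- The positive cone `R₊` of a `ℤ₊`-ring with basis `b`. -/
def ZPos [NonUnitalRing R] (b : Module.Basis Γ ℤ R) : Set R :=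
  {r | ∀ γ : Γ, 0 ≤ b.repr r γ}

/-- The structure constants of the multiplication with respect to `b` are nonnegative,
i.e. `(R, b)` is a `ℤ₊`-ring. -/
def PosBasis [NonUnitalRing R] (b : Module.Basis Γ ℤ R) : Prop :=
  ∀ α β γ : Γ, 0 ≤ b.repr (b α * b β) γ

/-- A Serre ideal: a two-sided ideal of the form `⨁_{γ ∈ Γ'} ℤ b_γ`. -/
def IsSerreIdeal [NonUnitalRing R] (b : Module.Basis Γ ℤ R) (I : Set R) : Prop :=
  (∃ Γ' : Set Γ, I = ↑(Submodule.span ℤ (⇑b '' Γ'))) ∧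
  (∀ r ∈ I, ∀ s : R, s * r ∈ I) ∧
  (∀ r ∈ I, ∀ s : R, r * s ∈ I)

/-- A Serre prime ideal: a proper Serre ideal `P` such that for all Serre ideals
`I, J`, `IJ ⊆ P` implies `I ⊆ P` or `J ⊆ P`. -/
def IsSerrePrime [NonUnitalRing R] (b : Module.Basis Γ ℤ R) (P : Set R) : Prop :=
  IsSerreIdeal b P ∧ P ≠ Set.univ ∧
    ∀ I J : Set R, IsSerreIdeal b I → IsSerreIdeal b J →
      (∀ x ∈ I, ∀ y ∈ J, x * y ∈ P) → I ⊆ P ∨ J ⊆ P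

/-! A Serre ideal is determined by the basis elements it contains, so Serre ideals correspond to
index sets `Δ ⊆ Γ` closed under passing to the supports of `b μ * b δ` and `b δ * b μ`; this makes
(a) ⇒ (b) ⇔ (c) formal. For (b) ⇒ (d), positivity of the structure constants rules out
cancellation: the support of a product of elements of `R₊` is the union of the supports of the
products of basis elements in their supports. Hence the index set generated by `Q` and a set
`W ⊆ R₊` stable under multiplication by basis elements (up to `Q`) spans a Serre ideal whose square
lies in `Q` as soon as `W * W ⊆ Q`; applying this to `R₊ r R₊`, `r R₊`, `R₊ r` and finally `{r}`
gives `r ∈ Q`. For (d) ⇒ (a), starting from `b γ ∉ Q`, condition (d) yields some `b γ' ∉ Q` in the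
support of an element `b γ * w * b γ`; iterating gives a sequence, and an index set containing
that of `Q` maximal among those avoiding the sequence (Zorn) spans a Serre prime ideal. -/

open Module Submodule

section NonUnitalRing

variable [NonUnitalRing R] (b : Basis Γ ℤ R)

theorem Module.Basis.repr_mul_apply (x y : R) (γ : Γ) :
    b.repr (x * y) γ = ∑ α ∈ (b.repr x).support, ∑ β ∈ (b.repr y).support,
      b.repr x α * b.repr y β * b.repr (b α * b β) γ := by
  conv_lhs => rw [← b.linearCombination_repr x, ← b.linearCombination_repr y]
  simp only [Finsupp.linearCombination_apply, Finsupp.sum, Finset.sum_mul, Finset.mul_sum,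
    smul_mul_smul_comm, map_sum, map_zsmul, Finsupp.finsetSum_apply, Finsupp.smul_apply,
    smul_eq_mul]
  exact Finset.sum_comm

theorem Module.Basis.exists_repr_ne_zero_of_repr_mul_ne_zero {x y : R} {γ : Γ}
    (h : b.repr (x * y) γ ≠ 0) :
    ∃ α β, b.repr x α ≠ 0 ∧ b.repr y β ≠ 0 ∧ b.repr (b α * b β) γ ≠ 0 := by
  contrapose! h
  rw [b.repr_mul_apply]
  refine Finset.sum_eq_zero fun α hα => Finset.sum_eq_zero fun β hβ => ?_
  rw [Finsupp.mem_support_iff] at hα hβ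
  rw [h α β hα hβ, mul_zero]

theorem Module.Basis.mem_of_mem_span_image {Δ : Set Γ} {x : R} (hx : x ∈ span ℤ (b '' Δ))
    {γ : Γ} (hγ : b.repr x γ ≠ 0) : γ ∈ Δ :=
  b.mem_span_image.1 hx (by simpa using hγ)

/-- The index sets `Δ` for which `span ℤ (b '' Δ)` is a two-sided ideal. -/
def IsIdealIndexSet (Δ : Set Γ) : Prop :=
  ∀ δ ∈ Δ, ∀ μ γ, b.repr (b μ * b δ) γ ≠ 0 ∨ b.repr (b δ * b μ) γ ≠ 0 → γ ∈ Δ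

variable {b}

theorem IsIdealIndexSet.isSerreIdeal {Δ : Set Γ} (hΔ : IsIdealIndexSet b Δ) :
    IsSerreIdeal b (span ℤ (b '' Δ) : Set R) := by
  refine ⟨⟨Δ, rfl⟩, fun r hr s => ?_, fun r hr s => ?_⟩ <;>
    refine b.mem_span_image.2 fun γ hγ => ?_ <;>
    rw [Finset.mem_coe, Finsupp.mem_support_iff] at hγ
  · obtain ⟨μ, δ, -, hδ, h⟩ := b.exists_repr_ne_zero_of_repr_mul_ne_zero hγ
    exact hΔ δ (b.mem_of_mem_span_image hr hδ) μ γ (Or.inl h)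
  · obtain ⟨δ, μ, hδ, -, h⟩ := b.exists_repr_ne_zero_of_repr_mul_ne_zero hγ
    exact hΔ δ (b.mem_of_mem_span_image hr hδ) μ γ (Or.inr h)

theorem IsIdealIndexSet.union {Δ₁ Δ₂ : Set Γ} (h₁ : IsIdealIndexSet b Δ₁)
    (h₂ : IsIdealIndexSet b Δ₂) : IsIdealIndexSet b (Δ₁ ∪ Δ₂) := by
  rintro δ (hδ | hδ) μ γ hγ
  · exact Or.inl (h₁ δ hδ μ γ hγ)
  · exact Or.inr (h₂ δ hδ μ γ hγ)

theorem IsIdealIndexSet.sUnion {c : Set (Set Γ)} (h : ∀ Δ ∈ c, IsIdealIndexSet b Δ) :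
    IsIdealIndexSet b (⋃₀ c) := by
  rintro δ ⟨Δ, hΔc, hδ⟩ μ γ hγ
  exact ⟨Δ, hΔc, h Δ hΔc δ hδ μ γ hγ⟩

namespace IsSerreIdeal

variable {I : Set R} (hI : IsSerreIdeal b I)
include hI

theorem mem_iff {x : R} : x ∈ I ↔ ∀ γ, b.repr x γ ≠ 0 → b γ ∈ I := by
  obtain ⟨⟨Γ', rfl⟩, -, -⟩ := hI
  simp [Basis.mem_span_image, Set.subset_def]

theorem isIdealIndexSet : IsIdealIndexSet b {γ | b γ ∈ I} := by
  rintro δ hδ μ γ (h | h)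
  · exact hI.mem_iff.1 (hI.2.1 _ hδ _) γ h
  · exact hI.mem_iff.1 (hI.2.2 _ hδ _) γ h

theorem subset_span_of_subset {Δ : Set Γ} (h : ∀ γ, b γ ∈ I → γ ∈ Δ) :
    I ⊆ span ℤ (b '' Δ) :=
  fun _ hx => b.mem_span_image.2 fun γ hγ => h γ (hI.mem_iff.1 hx γ (by simpa using hγ))

theorem mul_mem_of_basis_mul_mem {x y : R}
    (h : ∀ α β, b.repr x α ≠ 0 → b.repr y β ≠ 0 → b α * b β ∈ I) : x * y ∈ I :=
  hI.mem_iff.2 fun γ hγ =>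
    let ⟨α, β, hα, hβ, hαβ⟩ := b.exists_repr_ne_zero_of_repr_mul_ne_zero hγ
    hI.mem_iff.1 (h α β hα hβ) γ hαβ

end IsSerreIdeal

theorem basis_mem_ZPos (γ : Γ) : b γ ∈ ZPos b := by
  classical
  intro δ
  rw [b.repr_self, Finsupp.single_apply]
  split_ifs <;> norm_num

section Positive

variable (hpos : PosBasis b)
include hpos

theorem repr_mul_summand_nonneg {X Y : R} (hX : X ∈ ZPos b) (hY : Y ∈ ZPos b) (α β γ : Γ) :
    0 ≤ b.repr X α * b.repr Y β * b.repr (b α * b β) γ :=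
  mul_nonneg (mul_nonneg (hX α) (hY β)) (hpos α β γ)

theorem mul_mem_ZPos {X Y : R} (hX : X ∈ ZPos b) (hY : Y ∈ ZPos b) : X * Y ∈ ZPos b := fun γ => by
  rw [b.repr_mul_apply]
  exact Finset.sum_nonneg fun α _ => Finset.sum_nonneg fun β _ =>
    repr_mul_summand_nonneg hpos hX hY α β γ

theorem repr_mul_ne_zero_iff {X Y : R} (hX : X ∈ ZPos b) (hY : Y ∈ ZPos b) {γ : Γ} :
    b.repr (X * Y) γ ≠ 0 ↔
      ∃ α β, b.repr X α ≠ 0 ∧ b.repr Y β ≠ 0 ∧ b.repr (b α * b β) γ ≠ 0 := by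
  have hterm := repr_mul_summand_nonneg hpos hX hY
  rw [b.repr_mul_apply, Ne, Finset.sum_eq_zero_iff_of_nonneg fun α _ =>
    Finset.sum_nonneg fun β _ => hterm α β γ]
  simp only [Finset.sum_eq_zero_iff_of_nonneg fun β _ => hterm _ β γ, mul_eq_zero,
    Finsupp.mem_support_iff]
  grind

section SemiprimeToPositive

variable {Q : Set R} (hQ : IsSerreIdeal b Q)
  (hsemi : ∀ I : Set R, IsSerreIdeal b I → (∀ x ∈ I, ∀ y ∈ I, x * y ∈ Q) → I ⊆ Q)
include hQ hsemi

/-- The Serre ideal spanned by `Q` and the supports of the elements of `W` is an ideal, by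
positivity, and its square lies in `Q`. -/
theorem subset_of_forall_mul_mem {W : Set R} (hW : W ⊆ ZPos b)
    (hl : ∀ w ∈ W, ∀ μ, b μ * w ∈ W ∪ Q) (hr : ∀ w ∈ W, ∀ μ, w * b μ ∈ W ∪ Q)
    (hWW : ∀ w ∈ W, ∀ w' ∈ W, w * w' ∈ Q) : W ⊆ Q := by
  set Δ : Set Γ := {γ | b γ ∈ Q} ∪ {γ | ∃ w ∈ W, b.repr w γ ≠ 0}
  have hΔ : IsIdealIndexSet b Δ := by
    rintro δ (hδ | ⟨w, hw, hwδ⟩) μ γ hγ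
    · exact Or.inl (hQ.isIdealIndexSet δ hδ μ γ hγ)
    have hmem : ∀ z ∈ W ∪ Q, b.repr z γ ≠ 0 → γ ∈ Δ := by
      rintro z (hz | hz) h
      · exact Or.inr ⟨z, hz, h⟩
      · exact Or.inl (hQ.mem_iff.1 hz γ h)
    have hμ : b.repr (b μ) μ ≠ 0 := by simp
    rcases hγ with h | h
    · exact hmem _ (hl w hw μ)
        ((repr_mul_ne_zero_iff hpos (basis_mem_ZPos μ) (hW hw)).2 ⟨μ, δ, hμ, hwδ, h⟩)
    · exact hmem _ (hr w hw μ)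
        ((repr_mul_ne_zero_iff hpos (hW hw) (basis_mem_ZPos μ)).2 ⟨δ, μ, hwδ, hμ, h⟩)
  have hsq : ∀ x ∈ (span ℤ (b '' Δ) : Set R), ∀ y ∈ (span ℤ (b '' Δ) : Set R), x * y ∈ Q := by
    refine fun x hx y hy => hQ.mul_mem_of_basis_mul_mem fun α β hα hβ => ?_
    obtain hα | ⟨w, hw, hwα⟩ := b.mem_of_mem_span_image hx hα
    · exact hQ.2.2 _ hα _
    obtain hβ | ⟨w', hw', hw'β⟩ := b.mem_of_mem_span_image hy hβ
    · exact hQ.2.1 _ hβ _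
    exact hQ.mem_iff.2 fun γ hγ => hQ.mem_iff.1 (hWW w hw w' hw') γ
      ((repr_mul_ne_zero_iff hpos (hW hw) (hW hw')).2 ⟨α, β, hwα, hw'β, hγ⟩)
  refine fun w hw => hsemi _ hΔ.isSerreIdeal hsq (b.mem_span_image.2 fun γ hγ => ?_)
  exact Or.inr ⟨w, hw, by simpa using hγ⟩

section Element

variable {r : R} (hr : r ∈ ZPos b) (hrQ : ∀ x, r * x * r ∈ Q)
include hr hrQ

theorem mul_mul_mem_of_forall_mul_mul_mem {u v : R} (hu : u ∈ ZPos b) (hv : v ∈ ZPos b) :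
    u * r * v ∈ Q := by
  have hmul : ∀ {X Y : R}, X ∈ ZPos b → Y ∈ ZPos b → X * Y ∈ ZPos b := mul_mem_ZPos hpos
  refine subset_of_forall_mul_mem hpos hQ hsemi (W := Set.image2 (· * r * ·) (ZPos b) (ZPos b))
    ?_ ?_ ?_ ?_ (Set.mem_image2_of_mem hu hv)
  · rintro _ ⟨u, hu, v, hv, rfl⟩
    exact hmul (hmul hu hr) hv
  · rintro _ ⟨u, hu, v, hv, rfl⟩ μ
    exact Or.inl ⟨b μ * u, hmul (basis_mem_ZPos μ) hu, v, hv, by simp only [mul_assoc]⟩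
  · rintro _ ⟨u, hu, v, hv, rfl⟩ μ
    exact Or.inl ⟨u, hu, v * b μ, hmul hv (basis_mem_ZPos μ), by simp only [mul_assoc]⟩
  · rintro _ ⟨u, -, v, -, rfl⟩ _ ⟨u', -, v', -, rfl⟩
    rw [show u * r * v * (u' * r * v') = u * (r * (v * u') * r) * v' by simp only [mul_assoc]]
    exact hQ.2.2 _ (hQ.2.1 _ (hrQ _) _) _

theorem mul_mem_of_forall_mul_mul_mem_left {v : R} (hv : v ∈ ZPos b) : r * v ∈ Q := by
  refine subset_of_forall_mul_mem hpos hQ hsemi (W := (r * ·) '' ZPos b) ?_ ?_ ?_ ?_ ⟨v, hv, rfl⟩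
  · rintro _ ⟨v, hv, rfl⟩
    exact mul_mem_ZPos hpos hr hv
  · rintro _ ⟨v, hv, rfl⟩ μ
    exact Or.inr (by simpa only [mul_assoc] using
      mul_mul_mem_of_forall_mul_mul_mem hpos hQ hsemi hr hrQ (basis_mem_ZPos μ) hv)
  · rintro _ ⟨v, hv, rfl⟩ μ
    exact Or.inl ⟨v * b μ, mul_mem_ZPos hpos hv (basis_mem_ZPos μ), by simp only [mul_assoc]⟩
  · rintro _ ⟨v, -, rfl⟩ _ ⟨v', -, rfl⟩
    rw [← mul_assoc]
    exact hQ.2.2 _ (hrQ v) v'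

theorem mul_mem_of_forall_mul_mul_mem_right {u : R} (hu : u ∈ ZPos b) : u * r ∈ Q := by
  refine subset_of_forall_mul_mem hpos hQ hsemi (W := (· * r) '' ZPos b) ?_ ?_ ?_ ?_ ⟨u, hu, rfl⟩
  · rintro _ ⟨u, hu, rfl⟩
    exact mul_mem_ZPos hpos hu hr
  · rintro _ ⟨u, hu, rfl⟩ μ
    exact Or.inl ⟨b μ * u, mul_mem_ZPos hpos (basis_mem_ZPos μ) hu, by simp only [mul_assoc]⟩
  · rintro _ ⟨u, hu, rfl⟩ μ
    exact Or.inr (mul_mul_mem_of_forall_mul_mul_mem hpos hQ hsemi hr hrQ hu (basis_mem_ZPos μ))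
  · rintro _ ⟨u, -, rfl⟩ _ ⟨u', -, rfl⟩
    rw [show u * r * (u' * r) = u * (r * u' * r) by simp only [mul_assoc]]
    exact hQ.2.1 _ (hrQ u') u

theorem mem_of_forall_mul_mul_mem : r ∈ Q := by
  refine Set.singleton_subset_iff.1 <| subset_of_forall_mul_mem hpos hQ hsemi ?_ ?_ ?_ ?_ <;>
    simp only [Set.mem_singleton_iff, forall_eq, Set.singleton_subset_iff]
  · exact hr
  · exact fun μ => Or.inr
      (mul_mem_of_forall_mul_mul_mem_right hpos hQ hsemi hr hrQ (basis_mem_ZPos μ))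
  · exact fun μ => Or.inr
      (mul_mem_of_forall_mul_mul_mem_left hpos hQ hsemi hr hrQ (basis_mem_ZPos μ))
  · exact mul_mem_of_forall_mul_mul_mem_left hpos hQ hsemi hr hrQ hr

end Element

end SemiprimeToPositive

end Positive

section PrimeAvoidance

variable {Q : Set R} {g : ℕ → Γ}
  (hg : ∀ n, ∃ w, b.repr (b (g n) * w * b (g n)) (g (n + 1)) ≠ 0)
include hg

theorem IsSerreIdeal.basis_mem_of_le {T : Set R} (hT : IsSerreIdeal b T) {k l : ℕ} (hkl : k ≤ l)
    (hk : b (g k) ∈ T) : b (g l) ∈ T := by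
  induction l, hkl using Nat.le_induction with
  | base => exact hk
  | succ l _ ih =>
    obtain ⟨w, hw⟩ := hg l
    exact hT.mem_iff.1 (hT.2.2 _ (hT.2.2 _ ih w) _) _ hw

theorem isSerrePrime_span_of_maximal {Δ : Set Γ} (hΔ : IsIdealIndexSet b Δ)
    (hgΔ : ∀ n, g n ∉ Δ)
    (hmax : ∀ Δ', IsIdealIndexSet b Δ' → Δ ⊆ Δ' → (∀ n, g n ∉ Δ') → Δ' ⊆ Δ) :
    IsSerrePrime b (span ℤ (b '' Δ)) := by
  refine ⟨hΔ.isSerreIdeal,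
    fun h => hgΔ 0 (b.self_mem_span_image.1 (by simp [← SetLike.mem_coe, h])), ?_⟩
  intro I J hI hJ hIJ
  have hmeet {T : Set R} (hT : IsSerreIdeal b T) (hTΔ : ¬ T ⊆ span ℤ (b '' Δ)) :
      ∃ n, b (g n) ∈ T := by
    by_contra! hTg
    refine hTΔ (hT.subset_span_of_subset fun γ hγ => hmax _ (hΔ.union hT.isIdealIndexSet)
      Set.subset_union_left (fun n hn => hn.elim (hgΔ n) (hTg n)) (Or.inr hγ))
  by_contra! hIJΔ
  obtain ⟨n, hn⟩ := hmeet hI hIJΔ.1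
  obtain ⟨m, hm⟩ := hmeet hJ hIJΔ.2
  obtain ⟨w, hw⟩ := hg (max n m)
  have hIJw := hIJ _ (hI.2.2 _ (hI.basis_mem_of_le hg (le_max_left n m) hn) w) _
    (hJ.basis_mem_of_le hg (le_max_right n m) hm)
  exact hgΔ _ (b.mem_of_mem_span_image hIJw hw)

theorem exists_isSerrePrime_of_forall_notMem (hQ : IsSerreIdeal b Q) (hgQ : ∀ n, b (g n) ∉ Q) :
    ∃ P, IsSerrePrime b P ∧ Q ⊆ P ∧ ∀ n, b (g n) ∉ P := by
  set F : Set (Set Γ) := {Δ | IsIdealIndexSet b Δ ∧ {γ | b γ ∈ Q} ⊆ Δ ∧ ∀ n, g n ∉ Δ}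
  have hchain : ∀ c ⊆ F, IsChain (· ⊆ ·) c → c.Nonempty → ∃ ub ∈ F, ∀ Δ ∈ c, Δ ⊆ ub := by
    refine fun c hcF _ ⟨Δ, hΔ⟩ => ⟨⋃₀ c, ⟨IsIdealIndexSet.sUnion fun Δ h => (hcF h).1, ?_, ?_⟩,
      fun _ => Set.subset_sUnion_of_mem⟩
    · exact (hcF hΔ).2.1.trans (Set.subset_sUnion_of_mem hΔ)
    · rintro n ⟨Δ', hΔ', hn⟩
      exact (hcF hΔ').2.2 n hn
  obtain ⟨Δ, -, ⟨hΔ, hQΔ, hgΔ⟩, hmax⟩ :=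
    zorn_subset_nonempty F hchain _ ⟨hQ.isIdealIndexSet, subset_rfl, hgQ⟩
  refine ⟨_, isSerrePrime_span_of_maximal hg hΔ hgΔ fun Δ' hΔ' hΔΔ' hgΔ' =>
      hmax ⟨hΔ', hQΔ.trans hΔΔ', hgΔ'⟩ hΔΔ',
    hQ.subset_span_of_subset fun γ hγ => hQΔ hγ, fun n hn => hgΔ n ?_⟩
  simpa using hn

end PrimeAvoidance

variable {Q : Set R} (hQ : IsSerreIdeal b Q)
include hQ

theorem exists_seq_of_forall_mul_mul_mem
    (hd : ∀ r ∈ ZPos b, (∀ x, r * x * r ∈ Q) → r ∈ Q) {γ₀ : Γ} (hγ₀ : b γ₀ ∉ Q) :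
    ∃ g : ℕ → Γ, g 0 = γ₀ ∧ (∀ n, b (g n) ∉ Q) ∧
      ∀ n, ∃ w, b.repr (b (g n) * w * b (g n)) (g (n + 1)) ≠ 0 := by
  have hstep (γ : {γ // b γ ∉ Q}) :
      ∃ γ' : {γ // b γ ∉ Q}, ∃ w, b.repr (b γ * w * b γ) γ' ≠ 0 := by
    obtain ⟨w, hw⟩ : ∃ w, b γ * w * b γ ∉ Q := by
      by_contra! h
      exact γ.2 (hd _ (basis_mem_ZPos _) h)
    obtain ⟨γ', hγ', hγ'Q⟩ : ∃ γ', b.repr (b γ * w * b γ) γ' ≠ 0 ∧ b γ' ∉ Q := by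
      simpa using mt hQ.mem_iff.2 hw
    exact ⟨⟨γ', hγ'Q⟩, w, hγ'⟩
  choose next hnext using hstep
  refine ⟨fun n => (next^[n] ⟨γ₀, hγ₀⟩).1, rfl, fun n => (next^[n] _).2, fun n => ?_⟩
  simpa only [Function.iterate_succ_apply'] using hnext (next^[n] ⟨γ₀, hγ₀⟩)

theorem exists_isSerrePrime_sInter_eq (hd : ∀ r ∈ ZPos b, (∀ x, r * x * r ∈ Q) → r ∈ Q) :
    ∃ S : Set (Set R), (∀ P ∈ S, IsSerrePrime b P) ∧ Q = ⋂₀ S := by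
  refine ⟨{P | IsSerrePrime b P ∧ Q ⊆ P}, fun P hP => hP.1,
    subset_antisymm (fun x hx => Set.mem_sInter.2 fun P hP => hP.2 hx) fun x hx => ?_⟩
  by_contra hxQ
  obtain ⟨γ₀, hxγ₀, hγ₀⟩ : ∃ γ, b.repr x γ ≠ 0 ∧ b γ ∉ Q := by
    simpa using mt hQ.mem_iff.2 hxQ
  obtain ⟨g, rfl, hgQ, hg⟩ := exists_seq_of_forall_mul_mul_mem hQ hd hγ₀
  obtain ⟨P, hP, hQP, hgP⟩ := exists_isSerrePrime_of_forall_notMem hg hQ hgQ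
  exact hgP 0 (hP.1.mem_iff.1 (Set.mem_sInter.1 hx P ⟨hP, hQP⟩) _ hxγ₀)

theorem subset_of_sq_subset_of_forall_ne
    (hc : ∀ I, IsSerreIdeal b I → Q ⊆ I → I ≠ Q → ¬ ∀ x ∈ I, ∀ y ∈ I, x * y ∈ Q)
    {I : Set R} (hI : IsSerreIdeal b I) (hII : ∀ x ∈ I, ∀ y ∈ I, x * y ∈ Q) : I ⊆ Q := by
  set K : Set R := ↑(span ℤ (b '' ({γ | b γ ∈ Q} ∪ {γ | b γ ∈ I})))
  have hK : IsSerreIdeal b K := (hQ.isIdealIndexSet.union hI.isIdealIndexSet).isSerreIdeal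
  have hIK : I ⊆ K := hI.subset_span_of_subset fun _ => Or.inr
  have hKK : ∀ x ∈ K, ∀ y ∈ K, x * y ∈ Q := by
    refine fun x hx y hy => hQ.mul_mem_of_basis_mul_mem fun α β hα hβ => ?_
    obtain hα | hα := b.mem_of_mem_span_image hx hα
    · exact hQ.2.2 _ hα _
    obtain hβ | hβ := b.mem_of_mem_span_image hy hβ
    · exact hQ.2.1 _ hβ _
    exact hII _ hα _ hβ
  by_contra hIQ
  exact hc K hK (hQ.subset_span_of_subset fun _ => Or.inl) (fun h => hIQ (h ▸ hIK)) hKK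

end NonUnitalRing

theorem serreSemiprime_tfae_general
    [NonUnitalRing R] (b : Module.Basis Γ ℤ R) (hpos : PosBasis b)
    (Q : Set R) (hQ : IsSerreIdeal b Q) :
    List.TFAE
      [∃ S : Set (Set R), (∀ P ∈ S, IsSerrePrime b P) ∧ Q = ⋂₀ S,
       ∀ I : Set R, IsSerreIdeal b I → (∀ x ∈ I, ∀ y ∈ I, x * y ∈ Q) → I ⊆ Q,
       ∀ I : Set R, IsSerreIdeal b I → Q ⊆ I → I ≠ Q → ¬ (∀ x ∈ I, ∀ y ∈ I, x * y ∈ Q),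
       ∀ r : R, r ∈ ZPos b → (∀ x : R, r * x * r ∈ Q) → r ∈ Q] := by
  tfae_have 1 → 2 := by
    rintro ⟨S, hS, rfl⟩ I hI hII
    refine fun y hy => Set.mem_sInter.2 fun P hP => ?_
    exact ((hS P hP).2.2 I I hI hI fun u hu v hv => Set.mem_sInter.1 (hII u hu v hv) P hP).elim
      (· hy) (· hy)
  tfae_have 2 → 3 := fun h2 I hI hQI hIQ hII => hIQ (subset_antisymm (h2 I hI hII) hQI)
  tfae_have 3 → 2 := fun h3 _ => subset_of_sq_subset_of_forall_ne hQ h3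
  tfae_have 2 → 4 := fun h2 _ => mem_of_forall_mul_mul_mem hpos hQ h2
  tfae_have 4 → 1 := exists_isSerrePrime_sInter_eq hQ
  tfae_finish

/-- characterizations of Serre semiprime ideals of a `ℤ₊`-ring.
For a proper Serre ideal `Q` the following are equivalent:
(a) `Q` is an intersection of Serre prime ideals;
(b) every Serre ideal `I` with `I² ⊆ Q` satisfies `I ⊆ Q`;
(c) every Serre ideal `I` properly containing `Q` satisfies `I² ⊄ Q`;
(d) for every `r ∈ R₊`, `rRr ⊆ Q` implies `r ∈ Q`. -/
theorem serreSemiprime_tfae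
    [NonUnitalRing R] (b : Module.Basis Γ ℤ R) (hpos : PosBasis b)
    (Q : Set R) (hQ : IsSerreIdeal b Q) (hproper : Q ≠ Set.univ) :
    List.TFAE
      [∃ S : Set (Set R), (∀ P ∈ S, IsSerrePrime b P) ∧ Q = ⋂₀ S,
       ∀ I : Set R, IsSerreIdeal b I → (∀ x ∈ I, ∀ y ∈ I, x * y ∈ Q) → I ⊆ Q,
       ∀ I : Set R, IsSerreIdeal b I → Q ⊆ I → I ≠ Q → ¬ (∀ x ∈ I, ∀ y ∈ I, x * y ∈ Q),
       ∀ r : R, r ∈ ZPos b → (∀ x : R, r * x * r ∈ Q) → r ∈ Q] :=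
  serreSemiprime_tfae_general b hpos Q hQ
end

section
/- Let R be a ℤ₊-ring and Q a proper Serre ideal with the property that for all r ∈ R₊, rRr ⊆ Q implies r ∈ Q. Then Q is an intersection of Serre prime ideals of R. (Levitzki–Nagata-type theorem for Serre ideals of ℤ₊-rings.) -/
variable {Γ R : Type*}

/-! For `g ∉ Q`, pick a basis vector `b γ₀ ∉ Q` in the support of `g`, and apply the condition
on `Q` to basis vectors (which lie in `R₊`) to continue it to a sequence of basis
vectors `b γₙ ∉ Q` with `b γₙ₊₁` occurring in `b γₙ R b γₙ`. A Serre ideal `P ⊇ Q` maximal among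
those avoiding the sequence is prime: if `I, J ⊄ P` and `IJ ⊆ P`, maximality puts a tail of the
sequence into both `P + I` and `P + J`, so `b γₖ R b γₖ ⊆ (P + I) R (P + J) ⊆ P` for some `k`,
which forces `b γₖ₊₁ ∈ P`. -/

open scoped Pointwise

theorem basis_mem_zPos [NonUnitalRing R] (b : Module.Basis Γ ℤ R) (γ : Γ) : b γ ∈ ZPos b := by
  intro δ
  rw [b.repr_self]
  exact Finsupp.single_nonneg.mpr zero_le_one δ

namespace IsSerreIdeal

variable [NonUnitalRing R] {b : Module.Basis Γ ℤ R} {I J : Set R}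

theorem mem_iff_s12 (hI : IsSerreIdeal b I) {r : R} : r ∈ I ↔ b '' (b.repr r).support ⊆ I := by
  obtain ⟨⟨A, rfl⟩, -⟩ := hI
  rw [SetLike.mem_coe, b.mem_span_image, Set.image_subset_iff]
  exact ⟨fun h γ hγ => b.self_mem_span_image.mpr (h hγ),
    fun h γ hγ => b.self_mem_span_image.mp (h hγ)⟩

theorem exists_basis_notMem (hI : IsSerreIdeal b I) {r : R} (hr : r ∉ I) :
    ∃ γ, b.repr r γ ≠ 0 ∧ b γ ∉ I := by
  rw [hI.mem_iff_s12, Set.image_subset_iff, Set.not_subset] at hr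
  simpa using hr

theorem basis_mem (hI : IsSerreIdeal b I) {r : R} (hr : r ∈ I) {γ : Γ}
    (hγ : b.repr r γ ≠ 0) : b γ ∈ I :=
  hI.mem_iff_s12.mp hr ⟨γ, Finsupp.mem_support_iff.mpr hγ, rfl⟩

theorem zero_mem (hI : IsSerreIdeal b I) : (0 : R) ∈ I := by
  obtain ⟨⟨A, rfl⟩, -⟩ := hI
  exact Submodule.zero_mem _

theorem add_mem (hI : IsSerreIdeal b I) {r s : R} (hr : r ∈ I) (hs : s ∈ I) : r + s ∈ I := by
  obtain ⟨⟨A, rfl⟩, -⟩ := hI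
  exact Submodule.add_mem _ hr hs

theorem mul_mem_left (hI : IsSerreIdeal b I) (s : R) {r : R} (hr : r ∈ I) : s * r ∈ I :=
  hI.2.1 r hr s

theorem mul_mem_right (hI : IsSerreIdeal b I) {r : R} (hr : r ∈ I) (s : R) : r * s ∈ I :=
  hI.2.2 r hr s

protected theorem add (hI : IsSerreIdeal b I) (hJ : IsSerreIdeal b J) :
    IsSerreIdeal b (I + J) := by
  obtain ⟨⟨A, rfl⟩, hIl, hIr⟩ := hI
  obtain ⟨⟨B, rfl⟩, hJl, hJr⟩ := hJ
  refine ⟨⟨A ∪ B, ?_⟩, ?_, ?_⟩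
  · rw [Set.image_union, Submodule.span_union, Submodule.coe_sup]
  · rintro _ ⟨i, hi, j, hj, rfl⟩ s
    rw [mul_add]
    exact Set.add_mem_add (hIl i hi s) (hJl j hj s)
  · rintro _ ⟨i, hi, j, hj, rfl⟩ s
    rw [add_mul]
    exact Set.add_mem_add (hIr i hi s) (hJr j hj s)

theorem sUnion {c : Set (Set R)} (hc : ∀ I ∈ c, IsSerreIdeal b I)
    (hchain : IsChain (· ⊆ ·) c) (hne : c.Nonempty) : IsSerreIdeal b (⋃₀ c) := by
  refine ⟨⟨b ⁻¹' ⋃₀ c, Set.ext fun r => ?_⟩, ?_, ?_⟩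
  · rw [SetLike.mem_coe, b.mem_span_image, ← Set.image_subset_iff]
    constructor
    · rintro ⟨I, hIc, hrI⟩
      exact ((hc I hIc).mem_iff_s12.mp hrI).trans (Set.subset_sUnion_of_mem hIc)
    · intro hr
      obtain ⟨I, hIc, hI⟩ := hchain.directedOn.exists_mem_subset_of_finite_of_subset_sUnion hne
        ((b.repr r).support.finite_toSet.image b) hr
      exact ⟨I, hIc, (hc I hIc).mem_iff_s12.mpr hI⟩
  · rintro r ⟨I, hIc, hrI⟩ s
    exact ⟨I, hIc, (hc I hIc).mul_mem_left s hrI⟩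
  · rintro r ⟨I, hIc, hrI⟩ s
    exact ⟨I, hIc, (hc I hIc).mul_mem_right hrI s⟩

theorem exists_maximal_avoiding {ι : Type*} {Q : Set R} (hQ : IsSerreIdeal b Q)
    {g : ι → R} (hQg : ∀ i, g i ∉ Q) :
    ∃ P, Q ⊆ P ∧ Maximal (fun I => IsSerreIdeal b I ∧ ∀ i, g i ∉ I) P := by
  refine zorn_subset_nonempty {I | IsSerreIdeal b I ∧ ∀ i, g i ∉ I}
    (fun c hc hchain hne => ⟨⋃₀ c, ⟨?_, ?_⟩, fun _ => Set.subset_sUnion_of_mem⟩) Q ⟨hQ, hQg⟩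
  · exact sUnion (fun I hI => (hc hI).1) hchain hne
  · rintro i ⟨I, hIc, hI⟩
    exact (hc hIc).2 i hI

theorem mul_mul_mem_of_mem_add {P : Set R} (hP : IsSerreIdeal b P) (hJ : IsSerreIdeal b J)
    (hIJ : ∀ i ∈ I, ∀ j ∈ J, i * j ∈ P) {r s : R} (hr : r ∈ P + I) (hs : s ∈ P + J)
    (x : R) : r * x * s ∈ P := by
  obtain ⟨p, hp, i, hi, rfl⟩ := hr
  obtain ⟨q, hq, j, hj, rfl⟩ := hs
  have hexpand : (p + i) * x * (q + j) = p * x * (q + j) + (i * x * q + i * (x * j)) := by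
    noncomm_ring
  rw [hexpand]
  exact hP.add_mem (hP.mul_mem_right (hP.mul_mem_right hp x) _)
    (hP.add_mem (hP.mul_mem_left _ hq) (hIJ i hi _ (hJ.mul_mem_left x hj)))

end IsSerreIdeal

section MSequence

variable [NonUnitalRing R] {b : Module.Basis Γ ℤ R}

/-- The Serre analogue of an m-sequence `g_{n+1} ∈ g_n R g_n`: the basis vector `b (γ (n+1))`
occurs in some `b (γ n) * x * b (γ n)`. -/
def IsSerreMSeq (b : Module.Basis Γ ℤ R) (γ : ℕ → Γ) : Prop :=
  ∀ n, ∃ x : R, b.repr (b (γ n) * x * b (γ n)) (γ (n + 1)) ≠ 0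

namespace IsSerreMSeq

variable {γ : ℕ → Γ} {I P : Set R}

theorem basis_mem_of_le (hγ : IsSerreMSeq b γ) (hI : IsSerreIdeal b I) {m n : ℕ}
    (hmn : m ≤ n) (hm : b (γ m) ∈ I) : b (γ n) ∈ I := by
  induction n, hmn using Nat.le_induction with
  | base => exact hm
  | succ n _ ih =>
    obtain ⟨x, hx⟩ := hγ n
    exact hI.basis_mem (hI.mul_mem_right (hI.mul_mem_right ih x) _) hx

theorem exists_forall_ge_mem_add (hγ : IsSerreMSeq b γ)
    (hP : Maximal (fun I => IsSerreIdeal b I ∧ ∀ n, b (γ n) ∉ I) P)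
    (hI : IsSerreIdeal b I) (hIP : ¬ I ⊆ P) : ∃ m, ∀ n ≥ m, b (γ n) ∈ P + I := by
  have hPI : IsSerreIdeal b (P + I) := hP.prop.1.add hI
  have hmem : ∃ m, b (γ m) ∈ P + I := by
    by_contra! hnot
    exact hIP ((Set.subset_add_right I hP.prop.1.zero_mem).trans
      (hP.le_of_ge ⟨hPI, hnot⟩ (Set.subset_add_left P hI.zero_mem)))
  obtain ⟨m, hm⟩ := hmem
  exact ⟨m, fun n hn => hγ.basis_mem_of_le hPI hn hm⟩

theorem isSerrePrime_of_maximal (hγ : IsSerreMSeq b γ)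
    (hP : Maximal (fun I => IsSerreIdeal b I ∧ ∀ n, b (γ n) ∉ I) P) : IsSerrePrime b P := by
  obtain ⟨hPserre, hPγ⟩ := hP.prop
  refine ⟨hPserre, fun hPuniv => hPγ 0 (hPuniv ▸ Set.mem_univ _), fun I J hI hJ hIJ => ?_⟩
  by_contra! hIJP
  obtain ⟨m, hm⟩ := hγ.exists_forall_ge_mem_add hP hI hIJP.1
  obtain ⟨m', hm'⟩ := hγ.exists_forall_ge_mem_add hP hJ hIJP.2
  set k := max m m'
  obtain ⟨x, hx⟩ := hγ k
  have hsandwich : b (γ k) * x * b (γ k) ∈ P :=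
    hPserre.mul_mul_mem_of_mem_add hJ hIJ (hm k (le_max_left _ _)) (hm' k (le_max_right _ _)) x
  exact hPγ (k + 1) (hPserre.basis_mem hsandwich hx)

end IsSerreMSeq

theorem exists_isSerreMSeq {Q : Set R} (hQ : IsSerreIdeal b Q)
    (hsemiprime : ∀ γ, b γ ∉ Q → ∃ x, b γ * x * b γ ∉ Q) {γ₀ : Γ} (hγ₀ : b γ₀ ∉ Q) :
    ∃ γ : ℕ → Γ, γ 0 = γ₀ ∧ IsSerreMSeq b γ ∧ ∀ n, b (γ n) ∉ Q := by
  have hstep : ∀ γ, b γ ∉ Q → ∃ x : R, ∃ δ, b.repr (b γ * x * b γ) δ ≠ 0 ∧ b δ ∉ Q := by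
    intro γ hγ
    obtain ⟨x, hx⟩ := hsemiprime γ hγ
    exact ⟨x, hQ.exists_basis_notMem hx⟩
  choose! x next hnext using hstep
  have hnotMem : ∀ n, b (next^[n] γ₀) ∉ Q := by
    intro n
    induction n with
    | zero => exact hγ₀
    | succ n ih => exact Function.iterate_succ_apply' next n γ₀ ▸ (hnext _ ih).2
  refine ⟨fun n => next^[n] γ₀, rfl, fun n => ⟨x (next^[n] γ₀), ?_⟩, hnotMem⟩
  beta_reduce
  rw [Function.iterate_succ_apply']
  exact (hnext _ (hnotMem n)).1

theorem exists_isSerrePrime_notMem {Q : Set R} (hQ : IsSerreIdeal b Q)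
    (hsemiprime : ∀ γ, b γ ∉ Q → ∃ x, b γ * x * b γ ∉ Q) {g : R} (hg : g ∉ Q) :
    ∃ P, IsSerrePrime b P ∧ Q ⊆ P ∧ g ∉ P := by
  obtain ⟨γ₀, hγ₀g, hγ₀Q⟩ := hQ.exists_basis_notMem hg
  obtain ⟨γ, rfl, hγ, hγQ⟩ := exists_isSerreMSeq hQ hsemiprime hγ₀Q
  obtain ⟨P, hQP, hP⟩ := hQ.exists_maximal_avoiding hγQ
  exact ⟨P, hγ.isSerrePrime_of_maximal hP, hQP,
    fun hgP => hP.prop.2 0 (hP.prop.1.basis_mem hgP hγ₀g)⟩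

end MSequence

theorem serreSemiprime_of_rRr_condition_general
    [NonUnitalRing R] (b : Module.Basis Γ ℤ R)
    (Q : Set R) (hQ : IsSerreIdeal b Q)
    (h : ∀ r : R, r ∈ ZPos b → (∀ x : R, r * x * r ∈ Q) → r ∈ Q) :
    ∃ S : Set (Set R), (∀ P ∈ S, IsSerrePrime b P) ∧ Q = ⋂₀ S := by
  have hsemiprime : ∀ γ, b γ ∉ Q → ∃ x, b γ * x * b γ ∉ Q := fun γ hγ => by
    by_contra! hall
    exact hγ (h _ (basis_mem_zPos b γ) hall)
  refine ⟨{P | IsSerrePrime b P ∧ Q ⊆ P}, fun P hP => hP.1,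
    Set.Subset.antisymm (fun r hr P hP => hP.2 hr) fun r hr => ?_⟩
  by_contra hrQ
  obtain ⟨P, hP, hQP, hrP⟩ := exists_isSerrePrime_notMem hQ hsemiprime hrQ
  exact hrP (hr P ⟨hP, hQP⟩)

/-- Levitzki–Nagata for Serre ideals of `ℤ₊`-rings: if a proper
Serre ideal `Q` satisfies `rRr ⊆ Q → r ∈ Q` for all `r ∈ R₊`, then `Q` is an
intersection of Serre prime ideals. -/
theorem serreSemiprime_of_rRr_condition
    [NonUnitalRing R] (b : Module.Basis Γ ℤ R) (hpos : PosBasis b)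
    (Q : Set R) (hQ : IsSerreIdeal b Q) (hproper : Q ≠ Set.univ)
    (h : ∀ r : R, r ∈ ZPos b → (∀ x : R, r * x * r ∈ Q) → r ∈ Q) :
    ∃ S : Set (Set R), (∀ P ∈ S, IsSerrePrime b P) ∧ Q = ⋂₀ S :=
  serreSemiprime_of_rRr_condition_general b Q hQ h
end
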